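/- arXiv:math/0304058 — 7 statements merged into one kernel-verified Lean document; each statement's English description precedes it below -/
import Mathlib

section
/- If A is a sum-free subset of {1,...,N} that contains at least one even number t with t < N/2, then one can select ⌊N/8⌋ pairwise disjoint pairs (x, x+t) of odd numbers in {1,...,N}, and A contains at most one element from each pair. -/
private lemma div_unique_aux (m q r q' r' : ℕ) (hm : 0 < m)
    (h : m*q + r = m*q' + r') (hr : r < m) (hr' : r' < m) : q = q' ∧ r = r' := by
  have h1 : (m*q + r)/m = q := by
    rw [Nat.mul_add_div hm, Nat.div_eq_of_lt hr, Nat.add_zero]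
  have h2 : (m*q' + r')/m = q' := by
    rw [Nat.mul_add_div hm, Nat.div_eq_of_lt hr', Nat.add_zero]
  have hq : q = q' := by rw [← h1, ← h2, h]
  subst hq
  exact ⟨rfl, Nat.add_left_cancel h⟩

private lemma enc_inj (s q r q' r' : ℕ) (hs : 0 < s) (hr : r < s) (hr' : r' < s)
    (h : 4*s*q + 2*r + 1 = 4*s*q' + 2*r' + 1) : q = q' ∧ r = r' := by
  have h' : 4*s*q + (2*r + 1) = 4*s*q' + (2*r' + 1) := by
    rw [← Nat.add_assoc, ← Nat.add_assoc]; exact h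
  obtain ⟨hq, hrr⟩ := div_unique_aux (4*s) q (2*r+1) q' (2*r'+1) (by omega) h'
    (by omega) (by omega)
  exact ⟨hq, by omega⟩

private lemma enc_ne (s q r q' r' : ℕ) (hs : 0 < s) (hr : r < s) (hr' : r' < s) :
    4*s*q + 2*r + 1 ≠ 4*s*q' + 2*r' + 1 + (s + s) := by
  intro h
  have h' : 4*s*q + (2*r + 1) = 4*s*q' + (2*r' + 1 + (s+s)) := by
    rw [← Nat.add_assoc]
    calc 4*s*q + 2*r + 1 = 4*s*q' + 2*r' + 1 + (s+s) := h
    _ = 4*s*q' + (2*r' + 1 + (s+s)) := by ring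
  obtain ⟨hq, hrr⟩ := div_unique_aux (4*s) q (2*r+1) q' (2*r'+1+(s+s)) (by omega) h'
    (by omega) (by omega)
  omega

/-- If `A` is a sum-free subset of `{1,...,N}` containing an even number `t` with
`t < N/2`, then one can select `⌊N/8⌋` pairwise disjoint pairs `(x, x+t)` of odd
numbers in `{1,...,N}`, and `A` contains at most one element of each pair. -/
theorem cameron_erdos_even_pairs (N t : ℕ) (hN : 0 < N)
    (A : Finset ℕ) (hA : A ⊆ Finset.Icc 1 N)
    (hsf : ∀ x ∈ A, ∀ y ∈ A, ∀ z ∈ A, x + y ≠ z)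
    (ht : t ∈ A) (hte : Even t) (htN : (t : ℝ) < N / 2) :
    ∃ P : Finset (ℕ × ℕ), P.card = N / 8 ∧
      (∀ p ∈ P, p.2 = p.1 + t ∧ Odd p.1 ∧ Odd p.2 ∧
        p.1 ∈ Finset.Icc 1 N ∧ p.2 ∈ Finset.Icc 1 N) ∧
      (∀ p ∈ P, ∀ q ∈ P, p ≠ q →
        p.1 ≠ q.1 ∧ p.1 ≠ q.2 ∧ p.2 ≠ q.1 ∧ p.2 ≠ q.2) ∧
      (∀ p ∈ P, ¬ (p.1 ∈ A ∧ p.2 ∈ A)) := by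
  obtain ⟨s, hst⟩ := hte
  have htA := hA ht
  rw [Finset.mem_Icc] at htA
  have hs1 : 1 ≤ s := by omega
  have h2t : 2*t < N := by
    have h : (2*t : ℝ) < N := by push_cast; linarith
    exact_mod_cast h
  obtain ⟨Q, hQdef⟩ : ∃ Q, Q = (N+1)/(4*s) := ⟨_, rfl⟩
  obtain ⟨m, hmdef⟩ : ∃ m, m = s*Q := ⟨_, rfl⟩
  have hQ1 : 1 ≤ Q := by
    rw [hQdef]
    exact (Nat.one_le_div_iff (by omega)).2 (by omega)
  have hsm : s ≤ m := by
    rw [hmdef]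
    exact Nat.le_mul_of_pos_right s hQ1
  have hm1 : 4*m + (N+1)%(4*s) = N+1 := by
    rw [hmdef, hQdef, show 4*(s*((N+1)/(4*s))) = 4*s*((N+1)/(4*s)) from by ring]
    exact Nat.div_add_mod _ _
  have hkey : N/8 ≤ m := by
    obtain ⟨rem, hrem⟩ : ∃ rem, rem = (N+1)%(4*s) := ⟨_, rfl⟩
    have hrl : rem < 4*s := by rw [hrem]; exact Nat.mod_lt _ (by omega)
    rw [← hrem] at hm1
    omega
  -- the x-coordinates
  set f : ℕ → ℕ := fun j => 4*s*(j/s) + 2*(j%s) + 1 with hf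
  have hmodlt : ∀ j : ℕ, j % s < s := fun j => Nat.mod_lt _ (by omega)
  have hfinj : Function.Injective f := by
    intro i j h
    simp only [hf] at h
    obtain ⟨hq, hr⟩ := enc_inj s (i/s) (i%s) (j/s) (j%s) (by omega) (hmodlt i) (hmodlt j) h
    have hi := Nat.div_add_mod i s
    have hj := Nat.div_add_mod j s
    rw [hq, hr] at hi
    omega
  have hginj : Function.Injective (fun j => (f j, f j + t)) := by
    intro i j h
    exact hfinj (congrArg Prod.fst h)
  refine ⟨(Finset.range (N/8)).image (fun j => (f j, f j + t)), ?_, ?_, ?_, ?_⟩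
  · rw [Finset.card_image_of_injective _ hginj, Finset.card_range]
  · intro p hp
    rw [Finset.mem_image] at hp
    obtain ⟨j, hj, rfl⟩ := hp
    rw [Finset.mem_range] at hj
    refine ⟨rfl, ⟨2*s*(j/s) + j%s, by simp only [hf]; ring⟩,
      ⟨2*s*(j/s) + j%s + s, by simp only [hf]; rw [hst]; ring⟩, ?_, ?_⟩
    all_goals rw [Finset.mem_Icc]
    · constructor
      · simp only [hf]; omega
      · have hle : f j + t ≤ N := by
          -- j < N/8 ≤ m = s*Q, so j/s < Q
          have hjm : j < s*Q := by rw [← hmdef]; omega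
          have hqQ : j/s < Q := by
            have := Nat.div_add_mod j s
            rcases Nat.lt_or_ge (j/s) Q with h | h
            · exact h
            · exfalso
              have : s*Q ≤ s*(j/s) := Nat.mul_le_mul_left s h
              omega
          have h1 : 4*s*(j/s + 1) ≤ 4*s*Q := Nat.mul_le_mul_left (4*s) hqQ
          have h2 : 4*s*Q = 4*m := by rw [hmdef]; ring
          have h3 : 4*s*(j/s+1) = 4*s*(j/s) + 4*s := by ring
          obtain ⟨a, ha⟩ : ∃ a, a = 4*s*(j/s) := ⟨_, rfl⟩
          obtain ⟨b, hb⟩ : ∃ b, b = 4*s*(j/s+1) := ⟨_, rfl⟩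
          simp only [hf]
          rw [← ha]
          rw [h2, ← hb] at h1
          rw [← ha, ← hb] at h3
          have hr := hmodlt j
          omega
        omega
    · constructor
      · simp only [hf]; omega
      · -- same bound
        have hjm : j < s*Q := by rw [← hmdef]; omega
        have hqQ : j/s < Q := by
          have := Nat.div_add_mod j s
          rcases Nat.lt_or_ge (j/s) Q with h | h
          · exact h
          · exfalso
            have : s*Q ≤ s*(j/s) := Nat.mul_le_mul_left s h
            omega
        have h1 : 4*s*(j/s + 1) ≤ 4*s*Q := Nat.mul_le_mul_left (4*s) hqQ
        have h2 : 4*s*Q = 4*m := by rw [hmdef]; ring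
        have h3 : 4*s*(j/s+1) = 4*s*(j/s) + 4*s := by ring
        obtain ⟨a, ha⟩ : ∃ a, a = 4*s*(j/s) := ⟨_, rfl⟩
        obtain ⟨b, hb⟩ : ∃ b, b = 4*s*(j/s+1) := ⟨_, rfl⟩
        simp only [hf]
        rw [← ha]
        rw [h2, ← hb] at h1
        rw [← ha, ← hb] at h3
        have hr := hmodlt j
        omega
  · intro p hp q hq hpq
    rw [Finset.mem_image] at hp hq
    obtain ⟨i, hi, rfl⟩ := hp
    obtain ⟨j, hj, rfl⟩ := hq
    have hij : i ≠ j := by rintro rfl; exact hpq rfl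
    have h1 : f i ≠ f j := fun h => hij (hfinj h)
    have h2 : f i ≠ f j + t := by
      simp only [hf, hst]
      exact enc_ne s (i/s) (i%s) (j/s) (j%s) (by omega) (hmodlt i) (hmodlt j)
    have h3 : f i + t ≠ f j := by
      intro h
      apply enc_ne s (j/s) (j%s) (i/s) (i%s) (by omega) (hmodlt j) (hmodlt i)
      simp only [hf, hst] at h ⊢
      omega
    exact ⟨h1, h2, h3, fun h => h1 (by omega)⟩
  · rintro p hp ⟨h1, h2⟩
    rw [Finset.mem_image] at hp
    obtain ⟨j, hj, rfl⟩ := hp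
    exact hsf _ h1 t ht _ h2 rfl
end

section
/- Any subset of the even numbers {2, 4, 6, ..., 2⌊N/2⌋} of cardinality at least 12N/25 contains at least N²/100 triples (x, y, z) with x + y = z, for N sufficiently large. -/
/-- Any subset of `{2, 4, ..., 2⌊N/2⌋}` of cardinality at least `12N/25` contains
at least `N²/100` additive triples, for `N` sufficiently large. -/
theorem even_sets_many_additive_triples :
    ∃ N₀ : ℕ, ∀ N : ℕ, N₀ ≤ N → ∀ A : Finset ℕ,
      A ⊆ (Finset.Icc 1 (N / 2)).image (fun k => 2 * k) →
      (12 * (N : ℝ) / 25 ≤ A.card) →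
      ((N : ℝ) ^ 2 / 100 ≤
        (((A ×ˢ A) ×ˢ A).filter (fun p => p.1.1 + p.1.2 = p.2)).card) := by
  refine ⟨1000, fun N hN A hA hcard => ?_⟩
  set M := N / 2 with hM
  set K := A.card with hKdef
  have hmem : ∀ x ∈ A, ∃ j, 1 ≤ j ∧ j ≤ M ∧ x = 2 * j := by
    intro x hx
    obtain ⟨j, hj, rfl⟩ := Finset.mem_image.1 (hA hx)
    exact ⟨j, (Finset.mem_Icc.1 hj).1, (Finset.mem_Icc.1 hj).2, rfl⟩
  have hKM : K ≤ M := by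
    calc K ≤ ((Finset.Icc 1 M).image (fun k => 2*k)).card := Finset.card_le_card hA
    _ ≤ (Finset.Icc 1 M).card := Finset.card_image_le
    _ = M := by rw [Nat.card_Icc]; omega
  have hK : 12 * N ≤ 25 * K := by
    have : (12 * N : ℝ) ≤ 25 * K := by
      rw [div_le_iff₀ (by norm_num)] at hcard; linarith
    exact_mod_cast this
  set b := N / 5 with hb
  set t := b + (2*M + 1 - 2*K) with ht
  set B : ℕ → Finset ℕ := fun z => A.filter (fun x => x ≤ z ∧ z - x ∈ A) with hB
  -- per-z lower bound on the number of representations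
  have hBz : ∀ z ∈ A, 2*t ≤ z → b ≤ (B z).card := by
    intro z hz hzt
    obtain ⟨k, hk1, hkM, rfl⟩ := hmem z hz
    set A₁ := A.filter (fun x => x + 2 ≤ 2*k) with hA₁
    set A₂ := A₁.image (fun x => 2*k - x) with hA₂
    have hA₁card : K ≤ A₁.card + (M + 1 - k) := by
      have hsub : A.filter (fun x => ¬ (x + 2 ≤ 2*k)) ⊆
          (Finset.Icc k M).image (fun j => 2*j) := by
        intro x hx
        obtain ⟨hxA, hxk⟩ := Finset.mem_filter.1 hx
        obtain ⟨j, hj1, hjM, rfl⟩ := hmem x hxA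
        exact Finset.mem_image.2 ⟨j, Finset.mem_Icc.2 ⟨by omega, hjM⟩, rfl⟩
      have h1 := Finset.card_le_card hsub
      have h2 : ((Finset.Icc k M).image (fun j => 2*j)).card ≤ M + 1 - k := by
        calc _ ≤ (Finset.Icc k M).card := Finset.card_image_le
        _ = M + 1 - k := by rw [Nat.card_Icc]
      have h3 := Finset.card_filter_add_card_filter_not
        (s := A) (p := fun x => x + 2 ≤ 2*k)
      have h4 : (A.filter (fun x => x + 2 ≤ 2*k)).card = A₁.card := rfl
      omega
    have hA₂card : A₂.card = A₁.card := by
      apply Finset.card_image_of_injOn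
      intro x hx y hy hxy
      have hx' := (Finset.mem_filter.1 hx).2
      have hy' := (Finset.mem_filter.1 hy).2
      have hxy' : 2*k - x = 2*k - y := hxy
      omega
    have hunion : A₁ ∪ A₂ ⊆ (Finset.Icc 1 (k-1)).image (fun j => 2*j) := by
      intro x hx
      rcases Finset.mem_union.1 hx with hx | hx
      · obtain ⟨hxA, hxk⟩ := Finset.mem_filter.1 hx
        obtain ⟨j, hj1, hjM, rfl⟩ := hmem x hxA
        exact Finset.mem_image.2 ⟨j, Finset.mem_Icc.2 ⟨hj1, by omega⟩, rfl⟩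
      · obtain ⟨y, hy, rfl⟩ := Finset.mem_image.1 hx
        obtain ⟨hyA, hyk⟩ := Finset.mem_filter.1 hy
        obtain ⟨j, hj1, hjM, rfl⟩ := hmem y hyA
        exact Finset.mem_image.2 ⟨k - j, Finset.mem_Icc.2 ⟨by omega, by omega⟩, by omega⟩
    have hucard : (A₁ ∪ A₂).card ≤ k - 1 := by
      calc (A₁ ∪ A₂).card ≤ ((Finset.Icc 1 (k-1)).image (fun j => 2*j)).card :=
            Finset.card_le_card hunion
      _ ≤ (Finset.Icc 1 (k-1)).card := Finset.card_image_le
      _ = k - 1 := by rw [Nat.card_Icc]; omega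
    have hie := Finset.card_inter_add_card_union A₁ A₂
    have hsubB : A₁ ∩ A₂ ⊆ B (2*k) := by
      intro x hx
      obtain ⟨hx1, hx2⟩ := Finset.mem_inter.1 hx
      obtain ⟨hxA, hxk⟩ := Finset.mem_filter.1 hx1
      obtain ⟨a, ha, rfl⟩ := Finset.mem_image.1 hx2
      obtain ⟨haA, hak⟩ := Finset.mem_filter.1 ha
      refine Finset.mem_filter.2 ⟨hxA, by omega, ?_⟩
      have heq : 2*k - (2*k - a) = a := by omega
      rw [heq]; exact haA
    have hBcard := Finset.card_le_card hsubB
    omega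
  -- the set of large elements of A
  set A' := A.filter (fun z => 2*t ≤ z) with hA'
  have hA'card : K ≤ A'.card + (t - 1) := by
    have hsub : A.filter (fun z => ¬ (2*t ≤ z)) ⊆
        (Finset.Icc 1 (t-1)).image (fun j => 2*j) := by
      intro x hx
      obtain ⟨hxA, hxk⟩ := Finset.mem_filter.1 hx
      obtain ⟨j, hj1, hjM, rfl⟩ := hmem x hxA
      exact Finset.mem_image.2 ⟨j, Finset.mem_Icc.2 ⟨hj1, by omega⟩, rfl⟩
    have h1 := Finset.card_le_card hsub
    have h2 : ((Finset.Icc 1 (t-1)).image (fun j => 2*j)).card ≤ t - 1 := by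
      calc _ ≤ (Finset.Icc 1 (t-1)).card := Finset.card_image_le
      _ = t - 1 := by rw [Nat.card_Icc]; omega
    have h3 := Finset.card_filter_add_card_filter_not
      (s := A) (p := fun z => 2*t ≤ z)
    have h4 : (A.filter (fun z => 2*t ≤ z)).card = A'.card := rfl
    omega
  -- build an explicit subset of the triple set
  set Q := A'.biUnion (fun z => (B z).image (fun x => ((x, z - x), z))) with hQ
  have hQsub : Q ⊆ ((A ×ˢ A) ×ˢ A).filter (fun p => p.1.1 + p.1.2 = p.2) := by
    intro p hp
    obtain ⟨z, hz, hp⟩ := Finset.mem_biUnion.1 hp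
    obtain ⟨x, hx, rfl⟩ := Finset.mem_image.1 hp
    obtain ⟨hxA, hxz, hzx⟩ := Finset.mem_filter.1 hx
    have hzA : z ∈ A := (Finset.mem_filter.1 hz).1
    refine Finset.mem_filter.2 ⟨?_, ?_⟩
    · exact Finset.mem_product.2 ⟨Finset.mem_product.2 ⟨hxA, hzx⟩, hzA⟩
    · show x + (z - x) = z
      omega
  have hQcard : A'.card * b ≤ Q.card := by
    have hdisj : ∀ z₁ ∈ A', ∀ z₂ ∈ A', z₁ ≠ z₂ →
        Disjoint ((B z₁).image (fun x => ((x, z₁ - x), z₁)))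
          ((B z₂).image (fun x => ((x, z₂ - x), z₂))) := by
      intro z₁ _ z₂ _ hne
      rw [Finset.disjoint_left]
      intro p hp1 hp2
      obtain ⟨x, hx, rfl⟩ := Finset.mem_image.1 hp1
      obtain ⟨y, hy, heq⟩ := Finset.mem_image.1 hp2
      exact hne (congrArg Prod.snd heq).symm
    rw [hQ, Finset.card_biUnion hdisj]
    have hterm : ∀ z ∈ A', b ≤ ((B z).image (fun x => ((x, z - x), z))).card := by
      intro z hz
      obtain ⟨hzA, hzt⟩ := Finset.mem_filter.1 hz
      have hinj : Set.InjOn (fun x => ((x, z - x), z)) (B z) := by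
        intro x _ y _ h
        exact congrArg (fun p => p.1.1) h
      rw [Finset.card_image_of_injOn hinj]
      exact hBz z hzA hzt
    have := Finset.card_nsmul_le_sum A' _ b hterm
    simpa [smul_eq_mul] using this
  have htot : A'.card * b ≤
      (((A ×ˢ A) ×ˢ A).filter (fun p => p.1.1 + p.1.2 = p.2)).card :=
    le_trans hQcard (Finset.card_le_card hQsub)
  set a := A'.card with ha
  have h5 : N ≤ 5*b + 4 := by omega
  have h6 : 6*N ≤ 25*a := by omega
  have haN : a ≤ N := by
    have : a ≤ K := Finset.card_le_card (Finset.filter_subset _ _)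
    omega
  have hfin : N * N ≤ 100 * (a * b) := by
    nlinarith [Nat.mul_le_mul h6 h5, Nat.mul_le_mul_right N (show 30 ≤ N by omega)]
  rw [div_le_iff₀ (by norm_num : (0:ℝ) < 100)]
  have hfin2 : (N:ℝ) ^ 2 ≤
      ((((A ×ˢ A) ×ˢ A).filter (fun p => p.1.1 + p.1.2 = p.2)).card : ℝ) * 100 := by
    have h7 : N * N ≤
        (((A ×ˢ A) ×ˢ A).filter (fun p => p.1.1 + p.1.2 = p.2)).card * 100 := by
      calc N * N ≤ 100 * (a * b) := hfin
      _ ≤ 100 * (((A ×ˢ A) ×ˢ A).filter (fun p => p.1.1 + p.1.2 = p.2)).card :=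
          Nat.mul_le_mul_left _ htot
      _ = _ := by ring
    calc (N:ℝ) ^ 2 = ((N * N : ℕ) : ℝ) := by push_cast; ring
    _ ≤ _ := by exact_mod_cast h7
  exact hfin2
end

section
/- Let A ⊆ {1,...,N} have at most εN² additive triples. Then for all but at most 8ε^{1/4}N elements a ∈ A, at least |A| − 16ε^{1/4}N of the differences a − a' with a' ∈ A lie in D(A, 32ε^{1/2}N). -/
/-- If `A ⊆ {1,...,N}` has at most `εN²` additive triples, then for all but at most
`8ε^{1/4}N` elements `a ∈ A`, at least `|A| − 16ε^{1/4}N` of the differences `a − a'`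
with `a' ∈ A` lie in `D(A, 32ε^{1/2}N)`. -/
theorem most_elements_have_popular_differences (N : ℕ) (ε : ℝ) (hε : 0 < ε)
    (A : Finset ℤ) (hA : A ⊆ Finset.Icc 1 (N : ℤ))
    (htriples : ((((A ×ˢ A) ×ˢ A).filter (fun p => p.1.1 + p.1.2 = p.2)).card : ℝ)
      ≤ ε * N ^ 2) :
    ((A.filter (fun a =>
        ((A.filter (fun a' => 32 * Real.sqrt ε * N ≤
            (((A ×ˢ A).filter (fun p => p.1 - p.2 = a - a')).card : ℝ))).card : ℝ)
          < (A.card : ℝ) - 16 * ε ^ ((1 : ℝ) / 4) * N)).card : ℝ)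
      ≤ 8 * ε ^ ((1 : ℝ) / 4) * N := by
  classical
  rcases Nat.eq_zero_or_pos N with hN | hN
  · have hAe : A = ∅ := by
      refine Finset.subset_empty.mp ?_
      simpa [hN] using hA
    subst hN
    rw [hAe]
    simp
  · set K : ℝ := 32 * Real.sqrt ε * (N : ℝ) with hKdef
    set L : ℝ := 16 * ε ^ ((1 : ℝ) / 4) * (N : ℝ) with hLdef
    have hNpos : (0 : ℝ) < N := by exact_mod_cast hN
    have hK0 : (0 : ℝ) ≤ K := by positivity
    have hL0 : (0 : ℝ) < L := by positivity
    set B := A.filter (fun a =>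
        ((A.filter (fun a' => K ≤
            (((A ×ˢ A).filter (fun p => p.1 - p.2 = a - a')).card : ℝ))).card : ℝ)
          < (A.card : ℝ) - L) with hBdef
    set P := (A ×ˢ A).filter (fun p =>
        (((A ×ˢ A).filter (fun q => q.1 - q.2 = p.1 - p.2)).card : ℝ) < K) with hPdef
    -- Step 1: each bad element contributes more than L unpopular pairs
    have step1 : (B.card : ℝ) * L ≤
        ∑ a ∈ B, ((A.filter (fun a' =>
          (((A ×ˢ A).filter (fun p => p.1 - p.2 = a - a')).card : ℝ) < K)).card : ℝ) := by
      have h := Finset.card_nsmul_le_sum B (fun a => ((A.filter (fun a' =>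
          (((A ×ˢ A).filter (fun p => p.1 - p.2 = a - a')).card : ℝ) < K)).card : ℝ)) L ?_
      · simpa [nsmul_eq_mul] using h
      · intro a ha
        rw [hBdef, Finset.mem_filter] at ha
        obtain ⟨haA, hlt⟩ := ha
        have hsplit : (A.filter (fun a' => K ≤
              (((A ×ˢ A).filter (fun p => p.1 - p.2 = a - a')).card : ℝ))).card
            + (A.filter (fun a' =>
              (((A ×ˢ A).filter (fun p => p.1 - p.2 = a - a')).card : ℝ) < K)).card
            = A.card := by
          have h0 := Finset.card_filter_add_card_filter_not (s := A)
            (p := fun a' => K ≤ (((A ×ˢ A).filter (fun p => p.1 - p.2 = a - a')).card : ℝ))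
          have he : A.filter (fun a' => ¬ (K ≤
              (((A ×ˢ A).filter (fun p => p.1 - p.2 = a - a')).card : ℝ)))
              = A.filter (fun a' =>
              (((A ×ˢ A).filter (fun p => p.1 - p.2 = a - a')).card : ℝ) < K) := by
            simp only [not_le]
          rw [he] at h0
          exact h0
        have hc := congrArg (fun n : ℕ => (n : ℝ)) hsplit
        push_cast at hc
        linarith
    -- Step 2: extend sum from B to A
    have step2 : ∑ a ∈ B, ((A.filter (fun a' =>
          (((A ×ˢ A).filter (fun p => p.1 - p.2 = a - a')).card : ℝ) < K)).card : ℝ)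
        ≤ ∑ a ∈ A, ((A.filter (fun a' =>
          (((A ×ˢ A).filter (fun p => p.1 - p.2 = a - a')).card : ℝ) < K)).card : ℝ) := by
      refine Finset.sum_le_sum_of_subset_of_nonneg ?_ (fun a _ _ => Nat.cast_nonneg _)
      rw [hBdef]; exact Finset.filter_subset _ _
    -- Step 3: the double sum equals the number of unpopular pairs
    have step3 : ∑ a ∈ A, ((A.filter (fun a' =>
          (((A ×ˢ A).filter (fun p => p.1 - p.2 = a - a')).card : ℝ) < K)).card : ℝ)
        = (P.card : ℝ) := by
      have : ∑ a ∈ A, (A.filter (fun a' =>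
          (((A ×ˢ A).filter (fun p => p.1 - p.2 = a - a')).card : ℝ) < K)).card
          = P.card := by
        rw [hPdef, Finset.card_filter, Finset.sum_product]
        refine Finset.sum_congr rfl fun a _ => ?_
        rw [Finset.card_filter]
      rw [← this]
      push_cast
      rfl
    -- Step 4: fiberwise count of P over differences
    have hmem : ∀ p ∈ P, p.1 - p.2 ∈ Finset.Icc (1 - (N : ℤ)) ((N : ℤ) - 1) := by
      intro p hp
      rw [hPdef, Finset.mem_filter, Finset.mem_product] at hp
      have h1 := hA hp.1.1
      have h2 := hA hp.1.2
      simp only [Finset.mem_Icc] at h1 h2 ⊢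
      omega
    have hfib : P.card = ∑ d ∈ Finset.Icc (1 - (N : ℤ)) ((N : ℤ) - 1),
        (P.filter (fun p => p.1 - p.2 = d)).card :=
      Finset.card_eq_sum_card_fiberwise hmem
    have hbound : ∀ d ∈ Finset.Icc (1 - (N : ℤ)) ((N : ℤ) - 1),
        ((P.filter (fun p => p.1 - p.2 = d)).card : ℝ) ≤ K := by
      intro d _
      rcases Finset.eq_empty_or_nonempty (P.filter (fun p => p.1 - p.2 = d)) with he | hne
      · rw [he]; simpa using hK0
      · obtain ⟨p, hp⟩ := hne
        rw [Finset.mem_filter] at hp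
        obtain ⟨hpP, hpd⟩ := hp
        have hpP' := hpP
        rw [hPdef, Finset.mem_filter] at hpP'
        have hrd : (((A ×ˢ A).filter (fun q => q.1 - q.2 = d)).card : ℝ) < K := by
          rw [← hpd]; exact hpP'.2
        have hsub : P.filter (fun p => p.1 - p.2 = d)
            ⊆ (A ×ˢ A).filter (fun q => q.1 - q.2 = d) := by
          intro q hq
          rw [Finset.mem_filter] at hq ⊢
          refine ⟨?_, hq.2⟩
          have h := hq.1
          rw [hPdef, Finset.mem_filter] at h
          exact h.1
        have hcard := Finset.card_le_card hsub
        have : ((P.filter (fun p => p.1 - p.2 = d)).card : ℝ)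
            ≤ (((A ×ˢ A).filter (fun q => q.1 - q.2 = d)).card : ℝ) := by
          exact_mod_cast hcard
        linarith
    have hIccCard : (Finset.Icc (1 - (N : ℤ)) ((N : ℤ) - 1)).card = 2 * N - 1 := by
      rw [Int.card_Icc]
      omega
    have step4 : (P.card : ℝ) ≤ 2 * (N : ℝ) * K := by
      have h1 : (P.card : ℝ) = ∑ d ∈ Finset.Icc (1 - (N : ℤ)) ((N : ℤ) - 1),
          ((P.filter (fun p => p.1 - p.2 = d)).card : ℝ) := by
        rw [hfib]; push_cast; rfl
      have h2 : ∑ d ∈ Finset.Icc (1 - (N : ℤ)) ((N : ℤ) - 1),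
          ((P.filter (fun p => p.1 - p.2 = d)).card : ℝ)
          ≤ (Finset.Icc (1 - (N : ℤ)) ((N : ℤ) - 1)).card • K :=
        Finset.sum_le_card_nsmul _ _ _ hbound
      rw [nsmul_eq_mul, hIccCard] at h2
      have h3 : ((2 * N - 1 : ℕ) : ℝ) ≤ 2 * (N : ℝ) := by
        have : (1 : ℕ) ≤ 2 * N := by omega
        push_cast [this]
        linarith
      nlinarith
    -- combine
    have hchain : (B.card : ℝ) * L ≤ 2 * (N : ℝ) * K := by
      calc (B.card : ℝ) * L ≤ _ := step1
        _ ≤ _ := step2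
        _ = (P.card : ℝ) := step3
        _ ≤ 2 * (N : ℝ) * K := step4
    have h14 : ε ^ ((1 : ℝ) / 4) * ε ^ ((1 : ℝ) / 4) = Real.sqrt ε := by
      rw [← Real.rpow_add hε, Real.sqrt_eq_rpow]
      norm_num
    have hfinal : 2 * (N : ℝ) * K ≤ (8 * ε ^ ((1 : ℝ) / 4) * N) * L := by
      rw [hKdef, hLdef]
      nlinarith [Real.sqrt_nonneg ε, sq_nonneg ((N : ℝ)), h14,
        mul_nonneg (Real.sqrt_nonneg ε) (sq_nonneg ((N : ℝ)))]
    have : (B.card : ℝ) * L ≤ (8 * ε ^ ((1 : ℝ) / 4) * N) * L := le_trans hchain hfinal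
    exact le_of_mul_le_mul_right this hL0
end

section
/- Let t > N/4 and π : ℤ → ℤ/tℤ the natural projection. If A ⊆ {1,...,N} and d ∈ D(π(A), 8δN) for some δ > 0, then some integer d' with π(d') = d lies in D(A, δN). -/
/-- Let `t > N/4` and `π : ℤ → ℤ/tℤ` the natural projection. If `A ⊆ {1,...,N}` and
`d ∈ D(π(A), 8δN)`, then some integer `d'` with `π(d') = d` lies in `D(A, δN)`. -/
theorem popular_difference_lifts (N t : ℕ) (ht : (N : ℝ) / 4 < t)
    (A : Finset ℤ) (hA : A ⊆ Finset.Icc 1 (N : ℤ)) (δ : ℝ) (hδ : 0 < δ) (d : ZMod t)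
    (hd : 8 * δ * N ≤ ((((A.image (fun x : ℤ => (x : ZMod t))) ×ˢ
        (A.image (fun x : ℤ => (x : ZMod t)))).filter
        (fun p => p.1 - p.2 = d)).card : ℝ)) :
    ∃ d' : ℤ, (d' : ZMod t) = d ∧
      δ * N ≤ (((A ×ˢ A).filter (fun p => p.1 - p.2 = d')).card : ℝ) := by
  have htpos : 0 < t := by
    have h0 : (0:ℝ) < t := lt_of_le_of_lt (by positivity) ht
    exact_mod_cast h0
  haveI : NeZero t := ⟨htpos.ne'⟩
  rcases Nat.eq_zero_or_pos N with hN | hN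
  · refine ⟨(d.val : ℤ), ?_, ?_⟩
    · push_cast
      simp [ZMod.natCast_val, ZMod.cast_id]
    · subst hN
      simp
  -- main case
  set R := ((A.image (fun x : ℤ => (x : ZMod t))) ×ˢ
        (A.image (fun x : ℤ => (x : ZMod t)))).filter (fun p => p.1 - p.2 = d) with hR
  set P := (A ×ˢ A).filter (fun p : ℤ × ℤ => ((p.1 - p.2 : ℤ) : ZMod t) = d) with hP
  set L := (Finset.Icc (1 - (N:ℤ)) ((N:ℤ) - 1)).filter (fun d' : ℤ => ((d' : ℤ) : ZMod t) = d) with hL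
  have hRP : R.card ≤ P.card := by
    have h1 : R ⊆ P.image (fun p : ℤ × ℤ => ((p.1 : ZMod t), (p.2 : ZMod t))) := by
      intro x hx
      simp only [hR, hP, Finset.mem_filter, Finset.mem_product, Finset.mem_image] at hx ⊢
      obtain ⟨⟨⟨a, ha, hax⟩, ⟨b, hb, hbx⟩⟩, hxy⟩ := hx
      refine ⟨⟨a, b⟩, ⟨⟨ha, hb⟩, ?_⟩, ?_⟩
      · push_cast
        rw [hax, hbx]
        exact hxy
      · simp [hax, hbx]
    calc R.card ≤ (P.image (fun p : ℤ × ℤ => ((p.1 : ZMod t), (p.2 : ZMod t)))).card :=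
          Finset.card_le_card h1
      _ ≤ P.card := Finset.card_image_le
  have hmem : ∀ x ∈ A, 1 ≤ x ∧ x ≤ (N:ℤ) := fun x hx => Finset.mem_Icc.mp (hA hx)
  have hmaps : ∀ p ∈ P, p.1 - p.2 ∈ L := by
    intro p hp
    simp only [hP, Finset.mem_filter, Finset.mem_product] at hp
    obtain ⟨⟨h1, h2⟩, h3⟩ := hp
    obtain ⟨ha1, ha2⟩ := hmem _ h1
    obtain ⟨hb1, hb2⟩ := hmem _ h2
    simp only [hL, Finset.mem_filter, Finset.mem_Icc]
    exact ⟨⟨by omega, by omega⟩, h3⟩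
  have hsum : P.card = ∑ d' ∈ L, (P.filter (fun p => p.1 - p.2 = d')).card :=
    Finset.card_eq_sum_card_fiberwise hmaps
  have hL8 : L.card ≤ 8 := by
    have htZ : (0:ℤ) < (t:ℤ) := by exact_mod_cast htpos
    have hNt : (N:ℤ) < 4 * t := by
      have : (N:ℝ) < 4 * t := by linarith
      exact_mod_cast this
    have hinj : Set.InjOn (fun x : ℤ => (x + ((N:ℤ) - 1)) / t) L := by
      intro x hx y hy hxy
      simp only [hL, Finset.mem_filter, Finset.mem_Icc, Finset.mem_coe] at hx hy
      have hcast : (x : ZMod t) = (y : ZMod t) := hx.2.trans hy.2.symm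
      have hme : x ≡ y [ZMOD (t:ℤ)] := by
        rwa [ZMod.intCast_eq_intCast_iff'] at hcast
      have hme' : (x + ((N:ℤ)-1)) ≡ (y + ((N:ℤ)-1)) [ZMOD (t:ℤ)] := hme.add_right _
      have hmod : (x + ((N:ℤ)-1)) % t = (y + ((N:ℤ)-1)) % t := hme'
      have hxy' : (x + ((N:ℤ)-1)) / t = (y + ((N:ℤ)-1)) / t := hxy
      have e1 := Int.mul_ediv_add_emod (x + ((N:ℤ)-1)) t
      have e2 := Int.mul_ediv_add_emod (y + ((N:ℤ)-1)) t
      rw [hxy', hmod] at e1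
      linarith
    have hmapsL : ∀ x ∈ L, (x + ((N:ℤ) - 1)) / t ∈ Finset.Icc (0:ℤ) 7 := by
      intro x hx
      simp only [hL, Finset.mem_filter, Finset.mem_Icc] at hx
      simp only [Finset.mem_Icc]
      constructor
      · exact Int.ediv_nonneg (by omega) (by omega)
      · have : x + ((N:ℤ) - 1) < 8 * t := by omega
        have h8 : (x + ((N:ℤ) - 1)) / t < 8 := Int.ediv_lt_of_lt_mul htZ (by linarith)
        omega
    calc L.card ≤ (Finset.Icc (0:ℤ) 7).card :=
          Finset.card_le_card_of_injOn _ hmapsL hinj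
      _ = 8 := by decide
  -- pigeonhole
  by_contra hcon
  push_neg at hcon
  have hfib : ∀ d' ∈ L, ((P.filter (fun p => p.1 - p.2 = d')).card : ℝ) < δ * N := by
    intro d' hd'
    simp only [hL, Finset.mem_filter, Finset.mem_Icc] at hd'
    have hc := hcon d' hd'.2
    have heq : P.filter (fun p => p.1 - p.2 = d') = (A ×ˢ A).filter (fun p => p.1 - p.2 = d') := by
      rw [hP, Finset.filter_filter]
      apply Finset.filter_congr
      intro p hp
      constructor
      · rintro ⟨_, h⟩; exact h
      · intro h; exact ⟨by rw [h]; exact hd'.2, h⟩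
    rw [heq]
    exact hc
  have hPne : P.Nonempty := by
    have : (0:ℝ) < R.card := lt_of_lt_of_le (by positivity) hd
    have hRne : 0 < R.card := by exact_mod_cast this
    rw [← Finset.card_pos]
    omega
  have hLne : L.Nonempty := by
    obtain ⟨p, hp⟩ := hPne
    exact ⟨p.1 - p.2, hmaps p hp⟩
  have hsumR : (P.card : ℝ) < L.card * (δ * N) := by
    rw [hsum]
    push_cast
    calc (∑ d' ∈ L, ((P.filter (fun p => p.1 - p.2 = d')).card : ℝ))
        < ∑ d' ∈ L, δ * N := Finset.sum_lt_sum_of_nonempty hLne hfib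
      _ = L.card * (δ * N) := by rw [Finset.sum_const, nsmul_eq_mul]
  have hL8R : (L.card : ℝ) ≤ 8 := by exact_mod_cast hL8
  have hRP' : (R.card : ℝ) ≤ P.card := by exact_mod_cast hRP
  nlinarith [hd, hsumR, hL8R, hRP', mul_pos hδ (show (0:ℝ) < N by exact_mod_cast hN)]
end

section
/- Let t be a positive integer and X ⊆ ℤ/tℤ with |X − X| < 2|X| − t/3. Then X − X is a union of cosets of a subgroup H ≤ ℤ/tℤ with index at most 3; in particular, if X − X is not all of ℤ/tℤ nor a union of cosets of an index-3 subgroup, then t is even and X − X is a union of cosets of the index-2 subgroup. -/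
open scoped Pointwise
open Finset

variable {t : ℕ}

/-- `fd X g = |X ∩ (g + X)|`. -/
private def fd (X : Finset (ZMod t)) (g : ZMod t) : ℕ :=
  (X ∩ X.image (g + ·)).card

private lemma card_img (X : Finset (ZMod t)) (g : ZMod t) :
    (X.image (g + ·)).card = X.card :=
  Finset.card_image_of_injective _ (add_right_injective g)

private lemma mem_img {X : Finset (ZMod t)} {g y : ZMod t} :
    y ∈ X.image (g + ·) ↔ y - g ∈ X := by
  rw [Finset.mem_image]
  constructor
  · rintro ⟨x, hx, rfl⟩
    simpa using hx
  · intro h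
    exact ⟨y - g, h, by ring⟩

private lemma img_inter (X : Finset (ZMod t)) (a b : ZMod t) :
    X.image (a + ·) ∩ X.image (b + ·)
      = (X ∩ X.image ((b - a) + ·)).image (a + ·) := by
  ext y
  simp only [Finset.mem_inter, mem_img]
  constructor
  · rintro ⟨h1, h2⟩
    refine ⟨h1, ?_⟩
    have : y - a - (b - a) = y - b := by ring
    rw [this]
    exact h2
  · rintro ⟨h1, h2⟩
    refine ⟨h1, ?_⟩
    have : y - a - (b - a) = y - b := by ring
    rw [this] at h2
    exact h2

private lemma fd_zero (X : Finset (ZMod t)) : fd X 0 = X.card := by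
  unfold fd
  congr 1
  rw [Finset.inter_eq_left]
  intro x hx
  rw [mem_img]
  simpa using hx

private lemma fd_le (X : Finset (ZMod t)) (g : ZMod t) : fd X g ≤ X.card :=
  Finset.card_le_card (Finset.inter_subset_left)

private lemma fd_neg (X : Finset (ZMod t)) (g : ZMod t) : fd X (-g) = fd X g := by
  unfold fd
  have key : X ∩ X.image ((-g) + ·) = (X ∩ X.image (g + ·)).image ((-g) + ·) := by
    ext y
    rw [Finset.mem_inter, mem_img, Finset.mem_image]
    constructor
    · rintro ⟨h1, h2⟩
      refine ⟨y + g, Finset.mem_inter.2 ⟨by simpa using h2, mem_img.2 (by simpa using h1)⟩, by ring⟩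
    · rintro ⟨w, hw, rfl⟩
      rw [Finset.mem_inter, mem_img] at hw
      constructor
      · have e : -g + w = w - g := by ring
        rw [e]
        exact hw.2
      · have e : -g + w - -g = w := by ring
        rw [e]
        exact hw.1
  rw [key, Finset.card_image_of_injective _ (add_right_injective (-g))]

/-- Subadditivity: `f(g) + f(g') ≤ f(g+g') + |X|`. -/
private lemma fd_add (X : Finset (ZMod t)) (g g' : ZMod t) :
    fd X g + fd X g' ≤ fd X (g + g') + X.card := by
  classical
  set A := X ∩ X.image (g + ·) with hA
  set B := X.image (g + ·) ∩ X.image ((g + g') + ·) with hB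
  have hBcard : B.card = fd X g' := by
    rw [hB, img_inter X g (g + g'), Finset.card_image_of_injective _ (add_right_injective g)]
    unfold fd
    congr 2
    have : g + g' - g = g' := by ring
    rw [this]
  have hUnion : A ∪ B ⊆ X.image (g + ·) :=
    Finset.union_subset Finset.inter_subset_right Finset.inter_subset_left
  have hInter : A ∩ B ⊆ X ∩ X.image ((g + g') + ·) := by
    intro y hy
    rw [Finset.mem_inter, hA, hB, Finset.mem_inter, Finset.mem_inter] at hy
    exact Finset.mem_inter.2 ⟨hy.1.1, hy.2.2⟩
  have h1 : (A ∩ B).card ≤ fd X (g + g') := Finset.card_le_card hInter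
  have h2 : (A ∪ B).card ≤ X.card := by
    calc (A ∪ B).card ≤ (X.image (g + ·)).card := Finset.card_le_card hUnion
      _ = X.card := card_img X g
  have h3 : (A ∩ B).card + (A ∪ B).card = A.card + B.card :=
    Finset.card_inter_add_card_union A B
  have hAcard : A.card = fd X g := rfl
  omega

private lemma fd_mem_sub (X : Finset (ZMod t)) (g : ZMod t) :
    fd X g ≠ 0 ↔ g ∈ X - X := by
  unfold fd
  rw [← Nat.pos_iff_ne_zero, Finset.card_pos]
  constructor
  · rintro ⟨y, hy⟩
    rw [Finset.mem_inter, mem_img] at hy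
    exact Finset.mem_sub.2 ⟨y, hy.1, y - g, hy.2, by ring⟩
  · intro hg
    obtain ⟨a, ha, b, hb, rfl⟩ := Finset.mem_sub.1 hg
    exact ⟨a, Finset.mem_inter.2 ⟨ha, mem_img.2 (by simpa using hb)⟩⟩

/-- Mass identity: `Σ_g f(g) = |X|²`. -/
private lemma fd_sum [NeZero t] (X : Finset (ZMod t)) :
    ∑ g : ZMod t, fd X g = X.card * X.card := by
  classical
  have step1 : ∀ g : ZMod t, fd X g = ∑ x ∈ X, if x - g ∈ X then 1 else 0 := by
    intro g
    unfold fd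
    rw [← Finset.filter_mem_eq_inter, Finset.card_filter]
    apply Finset.sum_congr rfl
    intro x _
    simp only [mem_img]
  calc ∑ g : ZMod t, fd X g
      = ∑ g : ZMod t, ∑ x ∈ X, if x - g ∈ X then 1 else 0 := by
        exact Finset.sum_congr rfl fun g _ => step1 g
    _ = ∑ x ∈ X, ∑ g : ZMod t, if x - g ∈ X then 1 else 0 := Finset.sum_comm
    _ = ∑ x ∈ X, X.card := by
        apply Finset.sum_congr rfl
        intro x _
        rw [← Finset.card_filter]
        have : Finset.univ.filter (fun g => x - g ∈ X) = X.image (x - ·) := by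
          ext g
          rw [Finset.mem_filter, Finset.mem_image]
          constructor
          · rintro ⟨-, h⟩
            exact ⟨x - g, h, by ring⟩
          · rintro ⟨w, hw, rfl⟩
            refine ⟨Finset.mem_univ _, ?_⟩
            have : x - (x - w) = w := by ring
            rw [this]
            exact hw
        rw [this]
        apply Finset.card_image_of_injective
        intro a b hab
        have h2 : x - (x - a) = x - (x - b) := by rw [show x - a = (fun x_1 => x - x_1) a from rfl, hab]
        simpa using h2
    _ = X.card * X.card := by rw [Finset.sum_const, smul_eq_mul]

/-- Triple translate lemma: if `X ∩ (c+X) = ∅` and `(s+X) ∩ (c+X) = ∅`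
(encoded as `fd` vanishing) then `3|X| ≤ f(s) + t`. -/
private lemma fd_triple [NeZero t] (X : Finset (ZMod t)) (c s : ZMod t)
    (hc : fd X c = 0) (hcs : fd X (c - s) = 0) : 3 * X.card ≤ fd X s + t := by
  classical
  set A := X.image (s + ·) with hA
  set B := X.image (c + ·) with hB
  have hXB : Disjoint X B := by
    rw [Finset.disjoint_iff_inter_eq_empty, ← Finset.card_eq_zero]
    exact hc
  have hAB : Disjoint A B := by
    rw [Finset.disjoint_iff_inter_eq_empty, hA, hB, img_inter X s c, Finset.image_eq_empty,
      ← Finset.card_eq_zero]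
    exact hcs
  have hXA : (X ∩ A).card = fd X s := rfl
  have hcardU : (X ∪ A).card + fd X s = 2 * X.card := by
    have := Finset.card_inter_add_card_union X A
    have hAcard : A.card = X.card := card_img X s
    omega
  have hdisj : Disjoint (X ∪ A) B := Finset.disjoint_union_left.2 ⟨hXB, hAB⟩
  have hle : ((X ∪ A) ∪ B).card ≤ t := by
    have := Finset.card_le_card ((X ∪ A ∪ B).subset_univ)
    simpa [Finset.card_univ, ZMod.card] using this
  have hBcard : B.card = X.card := card_img X c
  have : ((X ∪ A) ∪ B).card = (X ∪ A).card + B.card := Finset.card_union_of_disjoint hdisj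
  omega
set_option maxHeartbeats 1600000 in
/-- Core structure theorem: if `X - X` misses some point and `3|X-X| + t < 6|X|`,
then there is an index-2 subgroup stabilizing `X - X`. -/
private theorem core {t : ℕ} [NeZero t] (X : Finset (ZMod t)) (c₀ : ZMod t)
    (hc₀ : c₀ ∉ X - X) (h : 3 * (X - X).card + t < 6 * X.card) :
    ∃ H : AddSubgroup (ZMod t), H.index = 2 ∧ ∀ a ∈ X - X, ∀ g ∈ H, a + g ∈ X - X := by
  classical
  have htpos : 0 < t := Nat.pos_of_ne_zero (NeZero.ne t)
  set ξ := X.card with hξdef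
  set S := X - X with hSdef
  set σ := S.card with hσdef
  have hfS : ∀ g, fd X g ≠ 0 ↔ g ∈ S := fun g => fd_mem_sub X g
  have hξpos : 0 < ξ := by omega
  obtain ⟨x₀, hx₀⟩ := Finset.card_pos.1 hξpos
  -- ξ ≤ σ
  have hsub_inj : ∀ w : ZMod t, Function.Injective (fun z : ZMod t => z - w) := by
    intro w u v huv
    simpa using congrArg (· + w) huv
  have hξσ : ξ ≤ σ := by
    have hsub : X.image (fun z => z - x₀) ⊆ S := by
      intro y hy
      obtain ⟨x, hx, rfl⟩ := Finset.mem_image.1 hy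
      exact Finset.sub_mem_sub hx hx₀
    calc ξ = (X.image (fun z => z - x₀)).card :=
          (Finset.card_image_of_injective _ (hsub_inj x₀)).symm
      _ ≤ σ := Finset.card_le_card hsub
  have h3ξ : t < 3 * ξ := by omega
  have hfc₀ : fd X c₀ = 0 := by
    by_contra h0
    exact hc₀ ((hfS c₀).1 h0)
  -- 2ξ ≤ t
  have h2ξ : 2 * ξ ≤ t := by
    have hd : Disjoint X (X.image (c₀ + ·)) := by
      rw [Finset.disjoint_iff_inter_eq_empty, ← Finset.card_eq_zero]
      exact hfc₀
    have h1 : (X ∪ X.image (c₀ + ·)).card = 2 * ξ := by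
      rw [Finset.card_union_of_disjoint hd, card_img]
      omega
    have h2 : (X ∪ X.image (c₀ + ·)).card ≤ t := by
      have := Finset.card_le_card ((X ∪ X.image (c₀ + ·)).subset_univ)
      simpa [Finset.card_univ, ZMod.card] using this
    omega
  set C := (Finset.univ : Finset (ZMod t)) \ S with hCdef
  set γ := C.card with hγdef
  have hγσ : γ + σ = t := by
    have := Finset.card_sdiff_add_card_eq_card (S.subset_univ)
    simpa [Finset.card_univ, ZMod.card] using this
  have hc₀C : c₀ ∈ C := Finset.mem_sdiff.2 ⟨Finset.mem_univ _, hc₀⟩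
  have hγ1 : 1 ≤ γ := Finset.card_pos.2 ⟨c₀, hc₀C⟩
  have hCzero : ∀ c ∈ C, fd X c = 0 := by
    intro c hc
    have := (Finset.mem_sdiff.1 hc).2
    by_contra h0
    exact this ((hfS c).1 h0)
  set P : ZMod t → Prop := fun g => 3 * ξ ≤ fd X g + t with hPdef
  have hPdec : DecidablePred P := fun g => by unfold P; infer_instance
  have hPS : ∀ g, P g → g ∈ S := by
    intro g hg
    refine (hfS g).1 ?_
    have := fd_le X g
    unfold P at hg
    omega
  have hCP : ∀ c ∈ C, P (c - c₀) := by
    intro c hc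
    have h1 : fd X (c - (c - c₀)) = 0 := by
      have : c - (c - c₀) = c₀ := by ring
      rw [this]; exact hfc₀
    exact fd_triple X c (c - c₀) (hCzero c hc) h1
  have hγσ' : γ ≤ σ := by
    have hsub : C.image (fun z => z - c₀) ⊆ S := by
      intro y hy
      obtain ⟨c, hc, rfl⟩ := Finset.mem_image.1 hy
      exact hPS _ (hCP c hc)
    calc γ = (C.image (fun z => z - c₀)).card :=
          (Finset.card_image_of_injective _ (hsub_inj c₀)).symm
      _ ≤ σ := Finset.card_le_card hsub
  have h2γ : 2 * γ ≤ t := by omega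
  have h12ξ : 5 * t + 2 ≤ 12 * ξ := by omega
  -- closure of P under addition (the hard part)
  have hPadd : ∀ g g', P g → P g' → P (g + g') := by
    intro g g' hg hg'
    by_contra hn
    unfold P at hg hg' hn
    set s := g + g' with hsdef
    have h5ξ : 5 * ξ ≤ fd X s + 2 * t := by
      have h5 := fd_add X g g'
      rw [← hsdef] at h5
      omega
    have hsne : fd X s ≠ 0 := by
      intro h0
      omega
    have hMprop : ∀ c ∈ C, (c - s ∈ S ∧ fd X (c - s) + fd X s ≤ ξ) := by
      intro c hc
      have hfc : fd X c = 0 := hCzero c hc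
      have h1 : fd X (c - s) ≠ 0 := by
        intro h0
        have := fd_triple X c s hfc h0
        omega
      have h2 : fd X (c - s) + fd X s ≤ fd X ((c - s) + s) + ξ := fd_add X (c - s) s
      rw [sub_add_cancel, hfc] at h2
      exact ⟨(hfS _).1 h1, by omega⟩
    set M := C.image (fun z => z - s) with hMdef
    have hMcard : M.card = γ := Finset.card_image_of_injective _ (hsub_inj s)
    have hMS : M ⊆ S := by
      intro y hy
      obtain ⟨c, hc, rfl⟩ := Finset.mem_image.1 hy
      exact (hMprop c hc).1
    have hsum : ∑ g ∈ S, fd X g = ξ * ξ := by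
      have h1 := Finset.sum_sdiff (f := fd X) (S.subset_univ)
      have h2 : ∑ g ∈ C, fd X g = 0 := Finset.sum_eq_zero hCzero
      rw [← hCdef] at h1
      rw [fd_sum X, h2, zero_add] at h1
      exact h1
    have hsplit : ∑ g ∈ S \ M, fd X g + ∑ g ∈ M, fd X g = ξ * ξ := by
      rw [Finset.sum_sdiff hMS, hsum]
    have hb1 : ∑ g ∈ M, fd X g ≤ γ * (ξ - fd X s) := by
      have := Finset.sum_le_card_nsmul M (fd X) (ξ - fd X s) ?_
      · rw [hMcard] at this
        simpa [smul_eq_mul] using this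
      · intro y hy
        obtain ⟨c, hc, rfl⟩ := Finset.mem_image.1 hy
        have := (hMprop c hc).2
        omega
    have hb2 : ∑ g ∈ S \ M, fd X g ≤ (σ - γ) * ξ := by
      have := Finset.sum_le_card_nsmul (S \ M) (fd X) ξ (fun y _ => fd_le X y)
      rw [Finset.card_sdiff_of_subset hMS, hMcard] at this
      simpa [smul_eq_mul] using this
    -- cast everything to ℤ and derive contradiction
    have hfsle : fd X s ≤ ξ := fd_le X s
    have hmass : (ξ : ℤ) * ξ ≤ (σ - γ) * ξ + γ * (ξ - fd X s) := by
      have : ξ * ξ ≤ (σ - γ) * ξ + γ * (ξ - fd X s) := by omega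
      have hcast := Nat.cast_le (α := ℤ) |>.2 this
      push_cast [Nat.cast_sub hγσ', Nat.cast_sub hfsle] at hcast
      convert hcast using 2 <;> push_cast [Nat.cast_sub hγσ', Nat.cast_sub hfsle] <;> ring
    have hZ1 : 5 * (ξ : ℤ) ≤ fd X s + 2 * t := by exact_mod_cast h5ξ
    have hZ2 : (fd X s : ℤ) + t + 1 ≤ 3 * ξ := by
      have : fd X s + t + 1 ≤ 3 * ξ := by omega
      exact_mod_cast this
    have hZ3 : (γ : ℤ) + σ = t := by exact_mod_cast hγσ
    have hZ4 : 2 * (γ : ℤ) ≤ t := by exact_mod_cast h2γ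
    have hZ5 : 2 * (ξ : ℤ) ≤ t := by exact_mod_cast h2ξ
    have hZ6 : 5 * (t : ℤ) + 2 ≤ 12 * ξ := by exact_mod_cast h12ξ
    have hZ7 : (1 : ℤ) ≤ γ := by exact_mod_cast hγ1
    have hZ8 : (t : ℤ) < 3 * ξ := by exact_mod_cast h3ξ
    have hZ9 : 3 * (σ : ℤ) + t < 6 * ξ := by exact_mod_cast h
    nlinarith [mul_nonneg (by linarith : (0:ℤ) ≤ 12 * (ξ:ℤ) - 5 * t - 2)
        (by linarith : (0:ℤ) ≤ (t:ℤ) - 2 * ξ),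
      mul_nonneg (by linarith : (0:ℤ) ≤ 3 * (γ:ℤ) + 6 * ξ - 4 * t - 1)
        (by linarith : (0:ℤ) ≤ 3 * (ξ:ℤ) - t),
      sq_nonneg ((t:ℤ) - 2 * ξ),
      mul_nonneg (by linarith : (0:ℤ) ≤ 12 * (ξ:ℤ) - 5 * t - 2) (by positivity : (0:ℤ) ≤ (ξ:ℤ))]
  have hP0 : P 0 := by
    show 3 * ξ ≤ fd X 0 + t
    rw [fd_zero]
    omega
  have hPneg : ∀ g, P g → P (-g) := by
    intro g hg
    show 3 * ξ ≤ fd X (-g) + t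
    rw [fd_neg]
    exact hg
  -- the subgroup
  set Hgrp : AddSubgroup (ZMod t) :=
    { carrier := {g | P g}
      add_mem' := fun {a b} ha hb => hPadd a b ha hb
      zero_mem' := hP0
      neg_mem' := fun {a} ha => hPneg a ha } with hHdef
  have hmemH : ∀ g, g ∈ Hgrp ↔ P g := fun g => Iff.rfl
  set Hset := Finset.univ.filter P with hHsetdef
  have hHcard : Nat.card Hgrp = Hset.card := by
    rw [Nat.card_eq_fintype_card]
    rw [Fintype.card_congr (Equiv.subtypeEquivRight (fun g => hmemH g))]
    exact Fintype.card_subtype P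
  have hγH : γ ≤ Hset.card := by
    have hsub : C.image (fun z => z - c₀) ⊆ Hset := by
      intro y hy
      obtain ⟨c, hc, rfl⟩ := Finset.mem_image.1 hy
      exact Finset.mem_filter.2 ⟨Finset.mem_univ _, hCP c hc⟩
    calc γ = (C.image (fun z => z - c₀)).card :=
          (Finset.card_image_of_injective _ (hsub_inj c₀)).symm
      _ ≤ Hset.card := Finset.card_le_card hsub
  have h3H : t < 3 * Hset.card := by omega
  have hidxmul : Hgrp.index * Hset.card = t := by
    have := AddSubgroup.index_mul_card Hgrp
    rw [hHcard, Nat.card_zmod] at this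
    exact this
  have hidxne1 : Hgrp.index ≠ 1 := by
    intro h1
    have : Hgrp = ⊤ := AddSubgroup.index_eq_one.1 h1
    have hc₀H : c₀ ∈ Hgrp := this ▸ AddSubgroup.mem_top c₀
    have := (hmemH c₀).1 hc₀H
    unfold P at this
    rw [hfc₀] at this
    omega
  have hidxlt : Hgrp.index < 3 := by
    by_contra h3
    push_neg at h3
    have : 3 * Hset.card ≤ Hgrp.index * Hset.card := Nat.mul_le_mul_right _ h3
    omega
  have hidx : Hgrp.index = 2 := by
    have : Hgrp.index ≠ 0 := by
      intro h0
      rw [h0] at hidxmul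
      omega
    omega
  have h2H : 2 * Hset.card = t := by rw [← hidx]; exact hidxmul
  -- endgame: S ⊆ Hgrp
  have hSP : ∀ s ∈ S, P s := by
    intro s hsS
    by_contra hns
    obtain ⟨x, hx, x', hx', hxx'⟩ := Finset.mem_sub.1 (hSdef ▸ hsS)
    set X₀ := X.filter (fun z => P (z - x')) with hX₀def
    set X₁ := X.filter (fun z => ¬ P (z - x')) with hX₁def
    have hab : X₀.card + X₁.card = ξ :=
      Finset.card_filter_add_card_filter_not (fun z => P (z - x'))
    set Sodd := S.filter (fun g => ¬ P g) with hSodddef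
    have hU : X₁.image (fun z => z - x') ⊆ Sodd := by
      intro y hy
      obtain ⟨z, hz, rfl⟩ := Finset.mem_image.1 hy
      have hz' := Finset.mem_filter.1 hz
      exact Finset.mem_filter.2 ⟨Finset.sub_mem_sub hz'.1 hx', hz'.2⟩
    have hV : X₀.image (fun z => z - x) ⊆ Sodd := by
      intro y hy
      obtain ⟨z, hz, rfl⟩ := Finset.mem_image.1 hy
      have hz' := Finset.mem_filter.1 hz
      refine Finset.mem_filter.2 ⟨Finset.sub_mem_sub hz'.1 hx, ?_⟩
      intro hPzx
      apply hns
      have := hPadd _ _ hz'.2 (hPneg _ hPzx)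
      have heq : z - x' + -(z - x) = s := by rw [← hxx']; ring
      rwa [heq] at this
    have hacard : X₀.card ≤ Sodd.card := by
      calc X₀.card = (X₀.image (fun z => z - x)).card :=
            (Finset.card_image_of_injective _ (hsub_inj x)).symm
        _ ≤ Sodd.card := Finset.card_le_card hV
    have hbcard : X₁.card ≤ Sodd.card := by
      calc X₁.card = (X₁.image (fun z => z - x')).card :=
            (Finset.card_image_of_injective _ (hsub_inj x')).symm
        _ ≤ Sodd.card := Finset.card_le_card hU
    -- Sodd and Hset are disjoint subsets of S
    have hdisj : Disjoint Sodd Hset := by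
      rw [Finset.disjoint_left]
      intro g hg hg'
      exact (Finset.mem_filter.1 hg).2 (Finset.mem_filter.1 hg').2
    have hcardle : Sodd.card + Hset.card ≤ σ := by
      have hsub : Sodd ∪ Hset ⊆ S := by
        apply Finset.union_subset (Finset.filter_subset _ _)
        intro g hg
        exact hPS g (Finset.mem_filter.1 hg).2
      have := Finset.card_le_card hsub
      rw [Finset.card_union_of_disjoint hdisj] at this
      omega
    omega
  exact ⟨Hgrp, hidx, fun a ha g hg =>
    (hfS _).1 (by
      have hPa := hSP a (hSdef ▸ ha)
      have hPg := (hmemH g).1 hg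
      have := hPadd a g hPa hPg
      unfold P at this
      have hfle := fd_le X (a + g)
      omega)⟩

/-- If `X ⊆ ℤ/tℤ` has `|X − X| < 2|X| − t/3`, then `X − X` is a union of cosets of a
subgroup of index at most 3; moreover, if `X − X` is neither all of `ℤ/tℤ` nor a union
of cosets of an index-3 subgroup, then `t` is even and `X − X` is a union of cosets of
an index-2 subgroup. -/
theorem diff_set_union_of_cosets (t : ℕ) (ht : 0 < t) (X : Finset (ZMod t))
    (h : ((X - X).card : ℝ) < 2 * X.card - (t : ℝ) / 3) :
    (∃ H : AddSubgroup (ZMod t), H.index ≤ 3 ∧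
        ∀ a ∈ X - X, ∀ h ∈ H, a + h ∈ X - X) ∧
      ((¬ ∀ z : ZMod t, z ∈ X - X) →
        (¬ ∃ H : AddSubgroup (ZMod t), H.index = 3 ∧
            ∀ a ∈ X - X, ∀ h ∈ H, a + h ∈ X - X) →
        Even t ∧ ∃ H : AddSubgroup (ZMod t), H.index = 2 ∧
            ∀ a ∈ X - X, ∀ h ∈ H, a + h ∈ X - X) := by
  classical
  haveI : NeZero t := ⟨ht.ne'⟩
  have hnat : 3 * (X - X).card + t < 6 * X.card := by
    have h3 : 3 * ((X - X).card : ℝ) + t < 6 * X.card := by linarith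
    exact_mod_cast h3
  by_cases hall : ∀ z : ZMod t, z ∈ X - X
  · refine ⟨⟨⊤, ?_, ?_⟩, ?_⟩
    · rw [AddSubgroup.index_top]
      omega
    · intro a _ g _
      exact hall _
    · intro hc _
      exact absurd hall hc
  · push_neg at hall
    obtain ⟨c₀, hc₀⟩ := hall
    obtain ⟨H, hidx, hstab⟩ := core X c₀ hc₀ hnat
    have heven : Even t := by
      have := AddSubgroup.index_mul_card H
      rw [Nat.card_zmod, hidx] at this
      exact ⟨Nat.card H, by omega⟩
    exact ⟨⟨H, by omega, hstab⟩, fun _ _ => ⟨heven, H, hidx, hstab⟩⟩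
end

section
/- Let p be prime, d ∈ ℤ/pℤ, L ≥ 1, and define g(x) = (1/(2L−1))·Σ_{j=−(L−1)}^{L−1} e^{2πi jdx/p}. Then for every x ∈ ℤ/pℤ, 1 − g(x) ≤ (2π²L²/3)·‖dx/p‖², and g(x) is real with g(x) ∈ [−1, 1]. -/
/-!
With `n = L - 1` and `θ = dx/p`, `(2L - 1) g(x)` is the Dirichlet kernel `D_n(θ) = ∑_{|j| ≤ n} e(jθ)`,
which is real because the sine terms of `j` and `-j` cancel, and lies in `[-(2n+1), 2n+1]`.
By periodicity and `1 - cos t ≤ t²/2`, `1 - cos(2πjθ) ≤ 2π²j²‖θ‖²`; summing over `|j| ≤ n` with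
`∑ j² = n(n+1)(2n+1)/3` gives `1 - g(x) ≤ 2π²n(n+1)‖θ‖²/3 ≤ 2π²L²‖θ‖²/3`.
-/

open Finset Real

theorem three_mul_sum_Icc_neg_sq (n : ℕ) :
    3 * ∑ j ∈ Icc (-n : ℤ) n, (j : ℝ) ^ 2 = n * (n + 1) * (2 * n + 1) := by
  induction n with
  | zero => simp
  | succ n ih =>
    have hsplit : Icc (-(n + 1 : ℕ) : ℤ) (n + 1 : ℕ) =
        insert (-(n + 1 : ℤ)) (cons (n + 1 : ℤ) (Icc (-n : ℤ) n) (by simp)) := by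
      ext
      simp only [mem_Icc, mem_insert, mem_cons]
      push_cast
      omega
    rw [hsplit, sum_insert (by simp only [mem_cons, mem_Icc]; omega), sum_cons]
    push_cast
    linear_combination ih

theorem one_sub_cos_two_pi_int_mul_le (j : ℤ) (θ : ℝ) :
    1 - cos (2 * π * j * θ) ≤ 2 * π ^ 2 * j ^ 2 * (θ - round θ) ^ 2 := by
  have hperiodic : cos (2 * π * j * θ) = cos (2 * π * j * (θ - round θ)) := by
    rw [← cos_add_int_mul_two_pi _ (-(j * round θ))]
    push_cast
    ring_nf
  rw [hperiodic]
  linarith [one_sub_sq_div_two_le_cos (x := 2 * π * j * (θ - round θ))]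

/-- The real form of the Dirichlet kernel `D_n(θ) = ∑_{|j| ≤ n} e(jθ)`. -/
noncomputable def dirichletKernel (n : ℕ) (θ : ℝ) : ℝ :=
  ∑ j ∈ Icc (-n : ℤ) n, cos (2 * π * j * θ)

theorem sum_Icc_neg_sin_eq_zero (n : ℕ) (θ : ℝ) :
    ∑ j ∈ Icc (-n : ℤ) n, sin (2 * π * j * θ) = 0 := by
  refine sum_involution (fun j _ ↦ -j) (fun j _ ↦ ?_) (fun j _ hj ↦ ?_) (fun j hj ↦ ?_)
    (fun j _ ↦ neg_neg j)
  · push_cast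
    rw [mul_neg, neg_mul, sin_neg, add_neg_cancel]
  · intro h
    obtain rfl : j = 0 := by omega
    simp at hj
  · simp only [mem_Icc] at hj ⊢
    omega

theorem sum_exp_eq_dirichletKernel (n : ℕ) (θ : ℝ) :
    ∑ j ∈ Icc (-n : ℤ) n, Complex.exp (↑(2 * π * j * θ) * Complex.I) = dirichletKernel n θ := by
  simp only [Complex.exp_mul_I, ← Complex.ofReal_cos, ← Complex.ofReal_sin, sum_add_distrib,
    ← sum_mul, ← Complex.ofReal_sum, sum_Icc_neg_sin_eq_zero, Complex.ofReal_zero, zero_mul,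
    add_zero, dirichletKernel]

theorem card_Icc_neg (n : ℕ) : (#(Icc (-n : ℤ) n) : ℝ) = 2 * n + 1 := by
  rw [Int.card_Icc, show (n + 1 - -n : ℤ) = (2 * n + 1 : ℕ) by push_cast; ring, Int.toNat_natCast]
  push_cast
  ring

theorem abs_dirichletKernel_le (n : ℕ) (θ : ℝ) : |dirichletKernel n θ| ≤ 2 * n + 1 := by
  rw [← card_Icc_neg n]
  exact (abs_sum_le_sum_abs _ _).trans <|
    (sum_le_card_nsmul _ _ 1 fun j _ ↦ abs_cos_le_one _).trans (by simp)

theorem sub_dirichletKernel_le (n : ℕ) (θ : ℝ) :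
    2 * n + 1 - dirichletKernel n θ ≤
      2 * π ^ 2 * (n * (n + 1) * (2 * n + 1) / 3) * (θ - round θ) ^ 2 := by
  calc 2 * n + 1 - dirichletKernel n θ = ∑ j ∈ Icc (-n : ℤ) n, (1 - cos (2 * π * j * θ)) := by
        rw [sum_sub_distrib, sum_const, nsmul_one, card_Icc_neg, dirichletKernel]
    _ ≤ ∑ j ∈ Icc (-n : ℤ) n, 2 * π ^ 2 * j ^ 2 * (θ - round θ) ^ 2 :=
        sum_le_sum fun j _ ↦ one_sub_cos_two_pi_int_mul_le j θ
    _ = 2 * π ^ 2 * (n * (n + 1) * (2 * n + 1) / 3) * (θ - round θ) ^ 2 := by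
        rw [← three_mul_sum_Icc_neg_sq, ← sum_mul, ← mul_sum]
        ring

theorem fejer_type_kernel_bound_general (p : ℕ) (d : ZMod p) (L : ℕ)
    (hL : 1 ≤ L) (g : ZMod p → ℂ)
    (hg : ∀ x : ZMod p, g x = (1 / (2 * (L : ℂ) - 1)) *
      ∑ j ∈ Finset.Icc (-(L : ℤ) + 1) ((L : ℤ) - 1),
        Complex.exp (2 * Real.pi * Complex.I * j * (((d * x).val : ℂ)) / p)) :
    ∀ x : ZMod p, (g x).im = 0 ∧ -1 ≤ (g x).re ∧ (g x).re ≤ 1 ∧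
      1 - (g x).re ≤ 2 * Real.pi ^ 2 * L ^ 2 / 3 *
        |(((d * x).val : ℝ) / p) - round (((d * x).val : ℝ) / p)| ^ 2 := by
  intro x
  obtain ⟨n, rfl⟩ : ∃ n : ℕ, L = n + 1 := ⟨L - 1, by omega⟩
  set θ : ℝ := (d * x).val / p
  have hgx : g x = ↑(dirichletKernel n θ / (2 * n + 1)) := by
    rw [hg x, one_div_mul_eq_div, Complex.ofReal_div, ← sum_exp_eq_dirichletKernel]
    push_cast
    congr 1
    · refine sum_congr (by congr 1 <;> ring) fun j _ ↦ ?_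
      congr 1
      simp only [θ]
      push_cast
      ring
    · ring
  have hpos : (0 : ℝ) < 2 * n + 1 := by positivity
  rw [hgx, Complex.ofReal_im, Complex.ofReal_re, sq_abs]
  obtain ⟨hlower, hupper⟩ := abs_le.mp (abs_dirichletKernel_le n θ)
  refine ⟨rfl, (le_div_iff₀ hpos).mpr (by linarith), (div_le_one hpos).mpr hupper, ?_⟩
  rw [one_sub_div hpos.ne', div_le_iff₀ hpos]
  refine (sub_dirichletKernel_le n θ).trans ?_
  have hgap : 0 ≤ π ^ 2 * (θ - round θ) ^ 2 * (2 * n + 1) * (n + 1) := by positivity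
  push_cast
  linarith

/-- For `g(x) = (1/(2L−1)) Σ_{j=−(L−1)}^{L−1} e(jdx/p)` one has that `g(x)` is real,
lies in `[−1,1]`, and `1 − g(x) ≤ (2π²L²/3)‖dx/p‖²`. -/
theorem fejer_type_kernel_bound (p : ℕ) (hp : p.Prime) (d : ZMod p) (L : ℕ)
    (hL : 1 ≤ L) (g : ZMod p → ℂ)
    (hg : ∀ x : ZMod p, g x = (1 / (2 * (L : ℂ) - 1)) *
      ∑ j ∈ Finset.Icc (-(L : ℤ) + 1) ((L : ℤ) - 1),
        Complex.exp (2 * Real.pi * Complex.I * j * (((d * x).val : ℂ)) / p)) :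
    ∀ x : ZMod p, (g x).im = 0 ∧ -1 ≤ (g x).re ∧ (g x).re ≤ 1 ∧
      1 - (g x).re ≤ 2 * Real.pi ^ 2 * L ^ 2 / 3 *
        |(((d * x).val : ℝ) / p) - round (((d * x).val : ℝ) / p)| ^ 2 :=
  fejer_type_kernel_bound_general p d L hL g hg
end

section
/- Let N be a positive integer and A ⊆ {1,...,N} sum-free, containing an element t with t ≤ (N+1)/3. Then one can select ⌊N/12⌋ − 4 pairwise disjoint pairs (x, x+t) with x ≥ N/2 and x + t ≤ N, and A contains at most one element of each pair. -/
/-- If `A ⊆ {1,...,N}` is sum-free and contains `t ≤ (N+1)/3`, then one can select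
`⌊N/12⌋ − 4` pairwise disjoint pairs `(x, x+t)` with `x ≥ N/2` and `x + t ≤ N`,
and `A` contains at most one element of each pair. -/
theorem cameron_erdos_large_element_pairs (N t : ℕ) (hN : 0 < N)
    (A : Finset ℕ) (hA : A ⊆ Finset.Icc 1 N)
    (hsf : ∀ x ∈ A, ∀ y ∈ A, ∀ z ∈ A, x + y ≠ z)
    (ht : t ∈ A) (htN : (t : ℝ) ≤ ((N : ℝ) + 1) / 3) :
    ∃ P : Finset (ℕ × ℕ), P.card = N / 12 - 4 ∧
      (∀ p ∈ P, p.2 = p.1 + t ∧ ((N : ℝ) / 2 ≤ p.1) ∧ p.2 ≤ N) ∧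
      (∀ p ∈ P, ∀ q ∈ P, p ≠ q →
        p.1 ≠ q.1 ∧ p.1 ≠ q.2 ∧ p.2 ≠ q.1 ∧ p.2 ≠ q.2) ∧
      (∀ p ∈ P, ¬ (p.1 ∈ A ∧ p.2 ∈ A)) := by
  have ht1 : 1 ≤ t := (Finset.mem_Icc.mp (hA ht)).1
  have h3t : 3 * t ≤ N + 1 := by
    have h : (3 : ℝ) * t ≤ (N : ℝ) + 1 := by linarith
    exact_mod_cast h
  set k := N / 12 - 4 with hk
  by_cases hk0 : k = 0
  · exact ⟨∅, by simp [hk0], by simp, by simp, by simp⟩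
  have hN60 : 60 ≤ N := by omega
  set m := (N + 1) / 2 with hm
  set f : ℕ → ℕ := fun i => m + 2 * (t * (i / t)) + i % t with hf
  have hfle : ∀ i, f i ≤ m + 2 * i := by
    intro i
    have h1 : t * (i / t) + i % t = i := Nat.div_add_mod i t
    simp only [hf]
    omega
  have hfge : ∀ i, m ≤ f i := fun i => by simp only [hf]; omega
  have keymod : ∀ a b : ℕ, a < 2 * t → (2 * (t * b) + a) % (2 * t) = a := by
    intro a b ha
    have h2 : 2 * (t * b) = (2 * t) * b := by ring
    rw [h2, Nat.mul_add_mod]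
    exact Nat.mod_eq_of_lt ha
  have keyinj : ∀ i j : ℕ, f i = f j → i = j := by
    intro i j h
    simp only [hf] at h
    have hi := Nat.div_add_mod i t
    have hj := Nat.div_add_mod j t
    have h' : 2 * (t * (i / t)) + i % t = 2 * (t * (j / t)) + j % t := by omega
    have hmi := keymod (i % t) (i / t) (by have := Nat.mod_lt i (show 0 < t by omega); omega)
    have hmj := keymod (j % t) (j / t) (by have := Nat.mod_lt j (show 0 < t by omega); omega)
    have hmod : i % t = j % t := by rw [← hmi, ← hmj, h']
    omega
  have keysh : ∀ i j : ℕ, f i ≠ f j + t := by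
    intro i j h
    simp only [hf] at h
    have hit := Nat.mod_lt i (show 0 < t by omega)
    have hjt := Nat.mod_lt j (show 0 < t by omega)
    have h' : 2 * (t * (i / t)) + i % t = 2 * (t * (j / t)) + (j % t + t) := by omega
    have hmi := keymod (i % t) (i / t) (by omega)
    have hmj := keymod (j % t + t) (j / t) (by omega)
    have : i % t = j % t + t := by rw [← hmi, ← hmj, h']
    omega
  refine ⟨(Finset.range k).image (fun i => (f i, f i + t)), ?_, ?_, ?_, ?_⟩
  · rw [Finset.card_image_of_injOn, Finset.card_range]
    intro i _ j _ hij
    exact keyinj i j (congrArg Prod.fst hij)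
  · intro p hp
    obtain ⟨i, hi, rfl⟩ := Finset.mem_image.mp hp
    rw [Finset.mem_range] at hi
    refine ⟨rfl, ?_, ?_⟩
    · have h1 : N ≤ 2 * f i := by
        have := hfge i
        omega
      have h2 : (N : ℝ) ≤ 2 * (f i : ℝ) := by exact_mod_cast h1
      simp only
      linarith
    · have := hfle i
      simp only
      omega
  · intro p hp q hq hpq
    obtain ⟨i, hi, rfl⟩ := Finset.mem_image.mp hp
    obtain ⟨j, hj, rfl⟩ := Finset.mem_image.mp hq
    have hij : i ≠ j := fun h => hpq (by rw [h])
    refine ⟨?_, ?_, ?_, ?_⟩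
    · exact fun h => hij (keyinj i j h)
    · exact keysh i j
    · exact fun h => keysh j i h.symm
    · intro h
      exact hij (keyinj i j (by omega))
  · intro p hp ⟨h1, h2⟩
    obtain ⟨i, hi, rfl⟩ := Finset.mem_image.mp hp
    exact hsf _ h1 t ht _ h2 rfl
end
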